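/- arXiv:2405.19772 — 3 statements merged into one kernel-verified Lean document; each statement's English description precedes it below -/
import Mathlib

section
/- For all real λ > 0, a > 0 and x ∈ ℝ, the operator T_{λ,a} preserves constants: ∫_{−∞}^{∞} κ^a_λ(x,ν) dν = 1. -/
/-!
Substituting `t = eʸ` in Euler's integral, continued analytically to a complex scale `c` with
`0 < re c`, shows that `y ↦ exp (b y - c eʸ)` has Fourier transform `c ^ (-(b - 2πiw)) Γ(b - 2πiw)`.
For `c = e^{iθ}` with `|θ| < π/2`, Plancherel's theorem turns this into
`∫ ‖Γ(b + is)‖² e^{2θs} ds = 2π (2 cos θ)^(-2b) Γ(2b)`.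
The kernel `κ a λ x` is a constant multiple of this integrand, with `b = λ/2`, `θ = arctan (x/a)`
and `s = λν/(2a)`, and `2 cos θ = 2a / √(a² + x²)` makes the constants cancel.
-/

open MeasureTheory Real Filter Topology

/-- The kernel associated with `a² + x²`. -/
noncomputable def κ (a lam x ν : ℝ) : ℝ :=
  (2 ^ (lam - 2) * lam * a ^ (lam - 1)) /
      (Real.pi * Real.Gamma lam * (a ^ 2 + x ^ 2) ^ (lam / 2)) *
    ‖Complex.Gamma ((lam * a + Complex.I * (lam * ν)) / (2 * a))‖ ^ 2 *
    Real.exp (lam * ν / a * Real.arctan (x / a))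

/-- The exponential-type operator `T_{λ,a}`. -/
noncomputable def T (a lam : ℝ) (f : ℝ → ℝ) (x : ℝ) : ℝ :=
  ∫ ν : ℝ, κ a lam x ν * f ν

open Complex Set
open scoped FourierTransform

lemma integrableOn_rpow_mul_exp_neg_mul {s r : ℝ} (hs : -1 < s) (hr : 0 < r) :
    IntegrableOn (fun t : ℝ => t ^ s * rexp (-(r * t))) (Ioi 0) := by
  simpa using integrableOn_rpow_mul_exp_neg_mul_rpow hs one_pos hr

lemma norm_cpow_mul_cexp_neg_mul {t : ℝ} (ht : 0 < t) (z c : ℂ) :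
    ‖(t : ℂ) ^ z * cexp (-(c * t))‖ = t ^ z.re * rexp (-(c.re * t)) := by
  simp [norm_cpow_eq_rpow_re_of_pos ht, Complex.norm_exp]

lemma integrableOn_cpow_mul_cexp_neg_mul {z c : ℂ} (hz : -1 < z.re) (hc : 0 < c.re) :
    IntegrableOn (fun t : ℝ => (t : ℂ) ^ z * cexp (-(c * t))) (Ioi 0) := by
  refine (integrableOn_rpow_mul_exp_neg_mul hz hc).mono' ?_ ?_
  · refine ContinuousOn.aestronglyMeasurable (fun t ht => ?_) measurableSet_Ioi
    refine ContinuousAt.continuousWithinAt (ContinuousAt.mul ?_ (by fun_prop))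
    exact (continuousAt_cpow_const (ofReal_mem_slitPlane.2 ht)).comp continuous_ofReal.continuousAt
  · filter_upwards [self_mem_ae_restrict measurableSet_Ioi] with t ht
    exact (norm_cpow_mul_cexp_neg_mul ht z c).le

lemma differentiableOn_integral_cpow_mul_cexp_neg_mul {z : ℂ} (hz : 0 < z.re) :
    DifferentiableOn ℂ (fun c : ℂ => ∫ t in Ioi (0 : ℝ), (t : ℂ) ^ (z - 1) * cexp (-(c * t)))
      {c | 0 < c.re} := by
  intro w (hw : 0 < w.re)
  refine DifferentiableAt.differentiableWithinAt ?_
  have hz' : -1 < (z - 1).re := by rw [sub_re, one_re]; linarith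
  have hw2 : 0 < w.re / 2 := by positivity
  refine (hasDerivAt_integral_of_dominated_loc_of_deriv_le (𝕜 := ℂ) (x₀ := w)
    (μ := volume.restrict (Ioi 0)) (F := fun u (t : ℝ) => (t : ℂ) ^ (z - 1) * cexp (-(u * t)))
    (F' := fun u (t : ℝ) => (t : ℂ) ^ z * cexp (-(u * t)) * (-1))
    (bound := fun t : ℝ => t ^ z.re * rexp (-(w.re / 2 * t))) (Metric.ball_mem_nhds w hw2)
    ?_ (integrableOn_cpow_mul_cexp_neg_mul hz' hw) ?_ ?_
    (integrableOn_rpow_mul_exp_neg_mul (by linarith) hw2) ?_).2.differentiableAt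
  · filter_upwards [(isOpen_lt continuous_const continuous_re).mem_nhds hw] with u (hu : 0 < u.re)
    exact (integrableOn_cpow_mul_cexp_neg_mul hz' hu).aestronglyMeasurable
  · exact ((integrableOn_cpow_mul_cexp_neg_mul (by linarith) hw).mul_const _).aestronglyMeasurable
  · filter_upwards [self_mem_ae_restrict measurableSet_Ioi] with t (ht : 0 < t) u hu
    have hu : w.re / 2 < u.re := by
      have := (abs_re_le_norm (u - w)).trans_lt (mem_ball_iff_norm.1 hu)
      rw [sub_re, abs_lt] at this
      linarith
    rw [norm_mul, norm_cpow_mul_cexp_neg_mul ht, norm_neg, norm_one, mul_one]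
    gcongr
  · filter_upwards [self_mem_ae_restrict measurableSet_Ioi] with t (ht : 0 < t) u _
    have hpow : (t : ℂ) ^ (z - 1) * t = (t : ℂ) ^ z := by
      nth_rw 2 [← cpow_one (t : ℂ)]
      rw [← cpow_add _ _ (ofReal_ne_zero.2 ht.ne'), sub_add_cancel]
    refine ((((hasDerivAt_id u).mul_const (t : ℂ)).neg.cexp).const_mul
      ((t : ℂ) ^ (z - 1))).congr_deriv ?_
    simp only [id, one_mul, ← hpow, Pi.neg_apply]
    ring

lemma integral_cpow_mul_cexp_neg_mul_Ioi {z c : ℂ} (hz : 0 < z.re) (hc : 0 < c.re) :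
    ∫ t in Ioi (0 : ℝ), (t : ℂ) ^ (z - 1) * cexp (-(c * t)) = c ^ (-z) * Gamma z := by
  have hU : IsPreconnected {c : ℂ | 0 < c.re} := (convex_halfSpace_re_gt 0).isPreconnected
  have hUo : IsOpen {c : ℂ | 0 < c.re} := isOpen_lt continuous_const continuous_re
  have hG : DifferentiableOn ℂ (fun c : ℂ => c ^ (-z) * Gamma z) {c | 0 < c.re} :=
    fun c (hc : 0 < c.re) => ((differentiableAt_id.cpow_const (Or.inl hc)).mul_const _)
      |>.differentiableWithinAt
  have hreal : ∀ r : ℝ, 0 < r → ∫ t in Ioi (0 : ℝ), (t : ℂ) ^ (z - 1) * cexp (-(r * t))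
      = (r : ℂ) ^ (-z) * Gamma z := by
    intro r hr
    rw [integral_cpow_mul_exp_neg_mul_Ioi hz hr, one_div,
      inv_cpow _ _ (by simp [arg_ofReal_of_nonneg hr.le, pi_ne_zero.symm]), cpow_neg]
  have hfreq : ∃ᶠ c in 𝓝[≠] (1 : ℂ), ∫ t in Ioi (0 : ℝ), (t : ℂ) ^ (z - 1) * cexp (-(c * t))
      = c ^ (-z) * Gamma z := by
    have hofReal : Tendsto ((↑) : ℝ → ℂ) (𝓝[≠] 1) (𝓝[≠] 1) :=
      tendsto_nhdsWithin_iff.2 ⟨(continuous_ofReal.tendsto 1).mono_left nhdsWithin_le_nhds,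
        eventually_nhdsWithin_of_forall fun r hr => by simpa using hr⟩
    refine hofReal.frequently (Eventually.frequently ?_)
    filter_upwards [eventually_nhdsWithin_of_eventually_nhds (lt_mem_nhds one_pos)] with r hr
    exact hreal r hr
  exact (differentiableOn_integral_cpow_mul_cexp_neg_mul hz).analyticOnNhd hUo
    |>.eqOn_of_preconnected_of_frequently_eq (hG.analyticOnNhd hUo) hU (by simp) hfreq hc

section ChangeOfVariables

variable {E : Type*} [NormedAddCommGroup E] [NormedSpace ℝ E]

theorem integral_Ioi_eq_integral_exp_smul_comp_exp (g : ℝ → E) :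
    ∫ t in Ioi (0 : ℝ), g t = ∫ y : ℝ, rexp y • g (rexp y) := by
  have h := integral_image_eq_integral_abs_deriv_smul MeasurableSet.univ
    (fun y _ => (Real.hasDerivAt_exp y).hasDerivWithinAt) Real.exp_injective.injOn g
  simpa [Real.range_exp, abs_of_pos (Real.exp_pos _)] using h

theorem integrableOn_Ioi_iff_integrable_exp_smul_comp_exp (g : ℝ → E) :
    IntegrableOn g (Ioi 0) ↔ Integrable (fun y : ℝ => rexp y • g (rexp y)) := by
  have h := integrableOn_image_iff_integrableOn_abs_deriv_smul MeasurableSet.univ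
    (fun y _ => (Real.hasDerivAt_exp y).hasDerivWithinAt) Real.exp_injective.injOn g
  simpa [Real.range_exp, abs_of_pos (Real.exp_pos _)] using h

end ChangeOfVariables

lemma Real.integrable_fourier_of_integrable_deriv_deriv {F : Type*} [NormedAddCommGroup F]
    [NormedSpace ℂ F] {f : ℝ → F} (hf : Integrable f) (hf' : Differentiable ℝ f)
    (hdf : Integrable (deriv f)) (hdf' : Differentiable ℝ (deriv f))
    (hddf : Integrable (deriv (deriv f))) : Integrable (𝓕 f) := by
  set M := (∫ y, ‖f y‖) + (∫ y, ‖deriv (deriv f) y‖) / (4 * π ^ 2)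
  have hfourier_dd (w : ℝ) : ‖𝓕 (deriv (deriv f)) w‖ = 4 * π ^ 2 * w ^ 2 * ‖𝓕 f w‖ := by
    rw [Real.fourier_deriv hdf hdf' hddf, Real.fourier_deriv hf hf' hdf]
    simp only [smul_smul, norm_smul, norm_mul, norm_real, norm_I, Real.norm_eq_abs,
      abs_of_pos pi_pos, Complex.norm_two]
    rw [← _root_.sq_abs w]
    ring
  have hbound (w : ℝ) : ‖𝓕 f w‖ ≤ M * (1 + w ^ 2)⁻¹ := by
    have h0 : ‖𝓕 f w‖ ≤ ∫ y, ‖f y‖ := VectorFourier.norm_fourierIntegral_le_integral_norm ..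
    have h2 : 4 * π ^ 2 * w ^ 2 * ‖𝓕 f w‖ ≤ ∫ y, ‖deriv (deriv f) y‖ :=
      hfourier_dd w ▸ VectorFourier.norm_fourierIntegral_le_integral_norm ..
    rw [le_mul_inv_iff₀ (by positivity), mul_add, mul_one]
    have : w ^ 2 * ‖𝓕 f w‖ ≤ (∫ y, ‖deriv (deriv f) y‖) / (4 * π ^ 2) := by
      rw [le_div_iff₀ (by positivity)]; linarith
    nlinarith
  have hcont : Continuous (𝓕 f) :=
    VectorFourier.fourierIntegral_continuous Real.continuous_fourierChar
      (by simpa only [innerₗ_apply_apply] using continuous_inner) hf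
  exact (integrable_inv_one_add_sq.const_mul M).mono' hcont.aestronglyMeasurable
    (Eventually.of_forall hbound)

theorem integral_norm_sq_fourier_of_integrable {V H : Type*} [NormedAddCommGroup V]
    [InnerProductSpace ℝ V] [FiniteDimensional ℝ V] [MeasurableSpace V] [BorelSpace V]
    [NormedAddCommGroup H] [InnerProductSpace ℂ H] [CompleteSpace H] {f : V → H}
    (hf : Integrable f) (hcont : Continuous f) (hFf : Integrable (𝓕 f)) :
    ∫ ξ, ‖𝓕 f ξ‖ ^ 2 = ∫ x, ‖f x‖ ^ 2 := by
  have h := VectorFourier.integral_sesq_fourierIntegral_eq_neg_flip (innerSL ℂ)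
    Real.continuous_fourierChar (L := innerₗ V) continuous_inner hf hFf
  have hflip : -(innerₗ V).flip = -innerₗ V := by
    congr 1; ext x y; exact real_inner_comm x y
  rw [hflip] at h
  change ∫ ξ, inner ℂ (𝓕 f ξ) (𝓕 f ξ) = ∫ x, inner ℂ (f x) (𝓕⁻ (𝓕 f) x) at h
  rw [hcont.fourierInv_fourier_eq hf hFf] at h
  apply Complex.ofRealLI.injective
  simpa [← LinearIsometry.integral_comp_comm, inner_self_eq_norm_sq_to_K] using h

section GammaExp

noncomputable def gammaExp (z c : ℂ) (y : ℝ) : ℂ := cexp (z * y - c * rexp y)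

variable {z c : ℂ}

lemma exp_smul_cpow_mul_cexp_neg_mul (z c : ℂ) (y : ℝ) :
    rexp y • ((rexp y : ℂ) ^ (z - 1) * cexp (-(c * rexp y))) = gammaExp z c y := by
  rw [ofReal_exp, cpow_def_of_ne_zero (Complex.exp_ne_zero _),
    Complex.log_exp (by simpa using pi_pos) (by simpa using pi_nonneg), real_smul, ofReal_exp,
    ← Complex.exp_add, ← Complex.exp_add, gammaExp, ofReal_exp]
  ring_nf

lemma integrable_gammaExp (hz : 0 < z.re) (hc : 0 < c.re) : Integrable (gammaExp z c) := by
  have h := (integrableOn_Ioi_iff_integrable_exp_smul_comp_exp _).1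
    (integrableOn_cpow_mul_cexp_neg_mul (z := z - 1) (by simpa using hz) hc)
  simpa only [exp_smul_cpow_mul_cexp_neg_mul] using h

lemma integral_gammaExp (hz : 0 < z.re) (hc : 0 < c.re) :
    ∫ y, gammaExp z c y = c ^ (-z) * Gamma z := by
  simp only [← integral_cpow_mul_cexp_neg_mul_Ioi hz hc, integral_Ioi_eq_integral_exp_smul_comp_exp,
    exp_smul_cpow_mul_cexp_neg_mul]

lemma norm_gammaExp (z c : ℂ) (y : ℝ) : ‖gammaExp z c y‖ = rexp (z.re * y - c.re * rexp y) := by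
  rw [gammaExp, Complex.norm_exp]
  simp only [sub_re, mul_re, ofReal_re, ofReal_im, mul_zero, sub_zero]

lemma ofReal_exp_mul_gammaExp (z c : ℂ) (y : ℝ) :
    (rexp y : ℂ) * gammaExp z c y = gammaExp (z + 1) c y := by
  rw [gammaExp, gammaExp, ofReal_exp, ← Complex.exp_add]
  ring_nf

lemma hasDerivAt_gammaExp (z c : ℂ) (y : ℝ) :
    HasDerivAt (gammaExp z c) (z * gammaExp z c y - c * gammaExp (z + 1) c y) y := by
  have h := (((hasDerivAt_id (y : ℂ)).const_mul z).sub
    ((Complex.hasDerivAt_exp y).const_mul c)).cexp.comp_ofReal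
  rw [← ofReal_exp_mul_gammaExp]
  convert h using 1
  · ext; simp [gammaExp]
  · simp only [gammaExp, ofReal_exp, id_eq, Pi.sub_apply, mul_one]
    ring

lemma deriv_gammaExp (z c : ℂ) :
    deriv (gammaExp z c) = fun y => z * gammaExp z c y - c * gammaExp (z + 1) c y :=
  funext fun y => (hasDerivAt_gammaExp z c y).deriv

lemma fourier_gammaExp (hz : 0 < z.re) (hc : 0 < c.re) (w : ℝ) :
    𝓕 (gammaExp z c) w = c ^ (-(z - 2 * π * I * w)) * Gamma (z - 2 * π * I * w) := by
  rw [← integral_gammaExp (by simpa using hz) hc, Real.fourier_real_eq_integral_exp_smul]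
  congr 1 with y
  rw [smul_eq_mul, gammaExp, gammaExp, ← Complex.exp_add]
  push_cast
  ring_nf

lemma integrable_fourier_gammaExp (hz : 0 < z.re) (hc : 0 < c.re) :
    Integrable (𝓕 (gammaExp z c)) := by
  have h0 := integrable_gammaExp hz hc
  have h1 := integrable_gammaExp (z := z + 1) (by rw [add_re, one_re]; linarith) hc
  have h2 := integrable_gammaExp (z := z + 1 + 1) (by simp only [add_re, one_re]; linarith) hc
  have hdd : deriv (deriv (gammaExp z c)) = fun y =>
      z * (z * gammaExp z c y - c * gammaExp (z + 1) c y)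
      - c * ((z + 1) * gammaExp (z + 1) c y - c * gammaExp (z + 1 + 1) c y) := by
    rw [deriv_gammaExp]
    exact funext fun y => (((hasDerivAt_gammaExp z c y).const_mul z).sub
      ((hasDerivAt_gammaExp (z + 1) c y).const_mul c)).deriv
  refine Real.integrable_fourier_of_integrable_deriv_deriv h0
    (fun y => (hasDerivAt_gammaExp z c y).differentiableAt) ?_ ?_ ?_
  · rw [deriv_gammaExp]
    exact (h0.const_mul z).sub (h1.const_mul c)
  · rw [deriv_gammaExp]
    exact fun y => (((hasDerivAt_gammaExp z c y).const_mul z).sub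
      ((hasDerivAt_gammaExp (z + 1) c y).const_mul c)).differentiableAt
  · rw [hdd]
    exact (((h0.const_mul z).sub (h1.const_mul c)).const_mul z).sub
      (((h1.const_mul (z + 1)).sub (h2.const_mul c)).const_mul c)

end GammaExp

lemma integral_exp_mul_sub_mul_exp {b c : ℝ} (hb : 0 < b) (hc : 0 < c) :
    ∫ y, rexp (b * y - c * rexp y) = c ^ (-b) * Real.Gamma b := by
  apply ofReal_injective
  rw [← integral_complex_ofReal, ofReal_mul, ofReal_cpow hc.le, ← Gamma_ofReal, ofReal_neg,
    ← integral_gammaExp (by simpa using hb) (by simpa using hc)]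
  congr 1 with y
  rw [gammaExp, ofReal_exp]
  push_cast
  ring_nf

theorem integral_norm_sq_Gamma_mul_exp {b θ : ℝ} (hb : 0 < b) (hθ : θ ∈ Ioo (-(π / 2)) (π / 2)) :
    ∫ s : ℝ, ‖Gamma (b + s * I)‖ ^ 2 * rexp (2 * θ * s)
      = 2 * π * ((2 * Real.cos θ) ^ (-(2 * b)) * Real.Gamma (2 * b)) := by
  have hcos : 0 < Real.cos θ := Real.cos_pos_of_mem_Ioo hθ
  set c := cexp (θ * I)
  have hcre : c.re = Real.cos θ := by simp [c, Complex.exp_re]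
  have hc : 0 < c.re := hcre ▸ hcos
  have hlog : Complex.log c = θ * I :=
    Complex.log_exp (by rw [mul_I_im, ofReal_re]; linarith [hθ.1, pi_pos])
      (by rw [mul_I_im, ofReal_re]; linarith [hθ.2, pi_pos])
  have hb' : 0 < (b : ℂ).re := by simpa using hb
  have hfourier (w : ℝ) : ‖𝓕 (gammaExp b c) w‖ ^ 2
      = ‖Gamma (b + ↑(-(2 * π) * w) * I)‖ ^ 2 * rexp (2 * θ * (-(2 * π) * w)) := by
    rw [fourier_gammaExp hb' hc, cpow_def_of_ne_zero (Complex.exp_ne_zero _), hlog, norm_mul,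
      mul_pow, Complex.norm_exp, mul_comm, ← Real.exp_nat_mul]
    have hre : (θ * I * -(b - 2 * π * I * w)).re = θ * (-(2 * π) * w) := by simp
    rw [hre, show (b : ℂ) - 2 * π * I * w = b + ↑(-(2 * π) * w) * I by push_cast; ring]
    push_cast
    ring_nf
  have hnorm (y : ℝ) : ‖gammaExp b c y‖ ^ 2 = rexp (2 * b * y - 2 * Real.cos θ * rexp y) := by
    rw [norm_gammaExp, ← Real.exp_nat_mul, ofReal_re, hcre]
    push_cast
    ring_nf
  have hcont : Continuous (gammaExp b c) := by unfold gammaExp; fun_prop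
  have h := integral_norm_sq_fourier_of_integrable (integrable_gammaExp hb' hc) hcont
    (integrable_fourier_gammaExp hb' hc)
  simp only [hfourier, hnorm, Measure.integral_comp_mul_left (fun s : ℝ =>
      ‖Gamma (b + s * I)‖ ^ 2 * rexp (2 * θ * s)),
    integral_exp_mul_sub_mul_exp (by positivity : 0 < 2 * b) (by positivity : 0 < 2 * Real.cos θ)]
    at h
  rw [← h, smul_eq_mul, abs_inv, abs_neg, abs_of_pos (by positivity),
    mul_inv_cancel_left₀ (by positivity)]

lemma κ_eq_mul_norm_sq_Gamma_mul_exp {a : ℝ} (ha : 0 < a) (lam x ν : ℝ) :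
    κ a lam x ν = 2 ^ (lam - 2) * lam * a ^ (lam - 1)
        / (π * Real.Gamma lam * (a ^ 2 + x ^ 2) ^ (lam / 2)) *
      (‖Gamma (↑(lam / 2) + ↑(lam / (2 * a) * ν) * I)‖ ^ 2
        * rexp (2 * Real.arctan (x / a) * (lam / (2 * a) * ν))) := by
  have ha' : (a : ℂ) ≠ 0 := ofReal_ne_zero.2 ha.ne'
  rw [κ, show ((lam : ℂ) * a + I * (lam * ν)) / (2 * a)
      = ↑(lam / 2) + ↑(lam / (2 * a) * ν) * I by push_cast; field_simp,
    show lam * ν / a * Real.arctan (x / a) = 2 * Real.arctan (x / a) * (lam / (2 * a) * ν) by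
      field_simp]
  ring

lemma two_mul_cos_arctan_div_rpow_neg {a : ℝ} (ha : 0 < a) (x lam : ℝ) :
    (2 * Real.cos (Real.arctan (x / a))) ^ (-lam)
      = (a ^ 2 + x ^ 2) ^ (lam / 2) / (2 * a) ^ lam := by
  have hs : √(a ^ 2 + x ^ 2) ^ lam = (a ^ 2 + x ^ 2) ^ (lam / 2) := by
    rw [sqrt_eq_rpow, ← rpow_mul (by positivity)]
    ring_nf
  have hcos : 2 * Real.cos (Real.arctan (x / a)) = 2 * a / √(a ^ 2 + x ^ 2) := by
    rw [cos_arctan, div_pow, one_add_div (by positivity), sqrt_div (by positivity),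
      sqrt_sq ha.le]
    field_simp
  rw [hcos, rpow_neg (by positivity), div_rpow (by positivity) (sqrt_nonneg _), inv_div, hs]

/-- `T_{λ,a}` preserves constants. -/
theorem T_const (lam a : ℝ) (hlam : 0 < lam) (ha : 0 < a) (x : ℝ) :
    ∫ ν : ℝ, κ a lam x ν = 1 := by
  have hsub := Measure.integral_comp_mul_left (fun s : ℝ =>
    ‖Gamma (↑(lam / 2) + s * I)‖ ^ 2 * rexp (2 * Real.arctan (x / a) * s)) (lam / (2 * a))
  simp only [κ_eq_mul_norm_sq_Gamma_mul_exp ha, integral_const_mul, hsub,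
    integral_norm_sq_Gamma_mul_exp (half_pos hlam) (arctan_mem_Ioo _),
    mul_div_cancel₀ _ (two_ne_zero' ℝ), two_mul_cos_arctan_div_rpow_neg ha, smul_eq_mul,
    abs_of_pos (by positivity : 0 < (lam / (2 * a))⁻¹)]
  rw [rpow_sub two_pos, rpow_sub_one ha.ne', mul_rpow two_pos.le ha.le]
  field_simp
  norm_num
end

section
/- For every integer p ≥ 1 and all real λ > 0, a > 0, the central moments of T_{λ,a} satisfy the recurrence relation: the function x ↦ μ^T_{λ,p}(x) is differentiable on ℝ and λ μ^T_{λ,p+1}(x)/(a² + x²) = p μ^T_{λ,p−1}(x) + (d/dx) μ^T_{λ,p}(x) for every x ∈ ℝ. -/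
/-!
Differentiate under the integral sign. Writing
`κ(x, ν) = c · |Γ(λ/2 + i λν/(2a))|² · exp φ(x, ν)` with
`φ(x, ν) = (λν/a) arctan (x/a) - (λ/2) log (a² + x²)`, one gets
`∂ₓ κ = κ · λ (ν - x)/(a² + x²)`, hence
`∂ₓ [κ (ν - x)^p] = λ/(a² + x²) · κ (ν - x)^(p+1) - p κ (ν - x)^(p-1)`, and integrating in
`ν` gives the recurrence.

Domination: for `|x| ≤ R` the factor `exp φ` grows at most like `exp ((λ/a) arctan (R/a) |ν|)`,
while `|Γ(σ + it)| ≤ C exp (-θ |t|)` for every `θ < π/2`, so `κ` decays exponentially in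
`ν`, uniformly in `x`. The Gamma bound comes from Euler's limit formula
`|Γ(σ + it) / Γ(σ)|² = ∏ⱼ (1 + t²/(σ + j)²)⁻¹`: the sum `∑ⱼ log (1 + t²/(σ + j)²)` is at
least `∫_σ^∞ log (1 + t²/y²) dy = π |t| - F(σ)`, where
`F(y) = y log (1 + t²/y²) + 2 |t| arctan (y/|t|)`.
-/

open MeasureTheory Real Filter Topology

/-- The central moments `μ^T_{λ,p}(x)`. -/
noncomputable def centralMoment (a lam : ℝ) (p : ℕ) (x : ℝ) : ℝ :=
  ∫ ν : ℝ, κ a lam x ν * (ν - x) ^ p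

noncomputable def logOneAddSqDivPrimitive (τ y : ℝ) : ℝ :=
  y * log (1 + τ ^ 2 / y ^ 2) + 2 * τ * arctan (y / τ)

lemma hasDerivAt_logOneAddSqDivPrimitive {τ y : ℝ} (hτ : τ ≠ 0) (hy : 0 < y) :
    HasDerivAt (logOneAddSqDivPrimitive τ) (log (1 + τ ^ 2 / y ^ 2)) y := by
  have hy2 : y ^ 2 ≠ 0 := by positivity
  have hpos : 0 < 1 + τ ^ 2 / y ^ 2 := by positivity
  have hlog : HasDerivAt (fun y => log (1 + τ ^ 2 / y ^ 2))
      ((0 * y ^ 2 - τ ^ 2 * (2 * y ^ 1)) / (y ^ 2) ^ 2 / (1 + τ ^ 2 / y ^ 2)) y :=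
    (((hasDerivAt_const y (τ ^ 2)).div (hasDerivAt_pow 2 y) hy2).const_add 1).log hpos.ne'
  have harctan : HasDerivAt (fun y => arctan (y / τ)) (1 / (1 + (y / τ) ^ 2) * (1 / τ)) y :=
    (hasDerivAt_arctan _).comp y ((hasDerivAt_id y).div_const τ)
  refine (((hasDerivAt_id y).mul hlog).add (harctan.const_mul (2 * τ))).congr_deriv ?_
  simp only [id]
  field_simp
  ring

lemma logOneAddSqDivPrimitive_add_one_sub_le {τ y : ℝ} (hτ : τ ≠ 0) (hy : 0 < y) :
    logOneAddSqDivPrimitive τ (y + 1) - logOneAddSqDivPrimitive τ y ≤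
      log (1 + τ ^ 2 / y ^ 2) := by
  obtain ⟨c, ⟨hyc, -⟩, hc⟩ := exists_hasDerivAt_eq_slope (logOneAddSqDivPrimitive τ)
    (fun y => log (1 + τ ^ 2 / y ^ 2)) (lt_add_one y)
    (fun z hz => (hasDerivAt_logOneAddSqDivPrimitive hτ
      (hy.trans_le hz.1)).continuousAt.continuousWithinAt)
    (fun z hz => hasDerivAt_logOneAddSqDivPrimitive hτ (hy.trans hz.1))
  rw [add_sub_cancel_left, div_one] at hc
  rw [← hc]
  gcongr

lemma tendsto_logOneAddSqDivPrimitive_atTop {τ : ℝ} (hτ : 0 < τ) :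
    Tendsto (logOneAddSqDivPrimitive τ) atTop (𝓝 (π * τ)) := by
  have hlog : Tendsto (fun y => y * log (1 + τ ^ 2 / y ^ 2)) atTop (𝓝 0) := by
    refine tendsto_of_tendsto_of_tendsto_of_le_of_le' tendsto_const_nhds
      (tendsto_const_nhds.div_atTop tendsto_id) ?_ ?_ (g := fun _ => 0) (h := fun y => τ ^ 2 / y)
    · filter_upwards [eventually_gt_atTop 0] with y hy
      have : 0 ≤ log (1 + τ ^ 2 / y ^ 2) := log_nonneg (by simp; positivity)
      positivity
    · filter_upwards [eventually_gt_atTop 0] with y hy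
      calc y * log (1 + τ ^ 2 / y ^ 2) ≤ y * (τ ^ 2 / y ^ 2) := by
            gcongr
            linarith [log_le_sub_one_of_pos (by positivity : 0 < 1 + τ ^ 2 / y ^ 2)]
        _ = τ ^ 2 / y := by field_simp
  have harctan : Tendsto (fun y => 2 * τ * arctan (y / τ)) atTop (𝓝 (2 * τ * (π / 2))) :=
    ((tendsto_arctan_atTop.mono_right nhdsWithin_le_nhds).comp
      (tendsto_id.atTop_div_const hτ)).const_mul _
  rw [show π * τ = 0 + 2 * τ * (π / 2) by ring]
  exact hlog.add harctan

lemma logOneAddSqDivPrimitive_le {τ y ε : ℝ} (hτ : 0 < τ) (hy : 0 < y) (hε : 0 < ε) :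
    logOneAddSqDivPrimitive τ y ≤ 2 * ε * τ + 2 * y * (ε - log ε) := by
  have hlog : log (1 + τ / y) ≤ ε * (τ / y) + ε - 1 - log ε := by
    have := log_le_sub_one_of_pos (by positivity : 0 < ε * (1 + τ / y))
    rw [log_mul hε.ne' (by positivity)] at this
    linarith
  have hsq : log (1 + τ ^ 2 / y ^ 2) ≤ 2 * log (1 + τ / y) := by
    have h := log_pow (1 + τ / y) 2
    push_cast at h
    rw [← h]
    gcongr
    rw [add_sq, div_pow]; nlinarith [div_pos hτ hy]
  have harctan : arctan (y / τ) ≤ y / τ := by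
    have h0 : 0 ≤ arctan (y / τ) := arctan_nonneg.mpr (by positivity)
    simpa [tan_arctan] using le_tan h0 (arctan_lt_pi_div_two _)
  unfold logOneAddSqDivPrimitive
  have h1 : y * log (1 + τ ^ 2 / y ^ 2) ≤ y * (2 * (ε * (τ / y) + ε - 1 - log ε)) := by
    gcongr; linarith
  have h2 : 2 * τ * arctan (y / τ) ≤ 2 * τ * (y / τ) := by gcongr
  have h3 : y * (2 * (ε * (τ / y) + ε - 1 - log ε)) + 2 * τ * (y / τ) =
      2 * ε * τ + 2 * y * (ε - log ε) := by field_simp; ring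
  linarith

lemma norm_ofReal_add_mul_I_eq_mul_exp {y : ℝ} (hy : 0 < y) (t : ℝ) :
    ‖(y : ℂ) + t * Complex.I‖ = y * exp (log (1 + t ^ 2 / y ^ 2) / 2) := by
  rw [Complex.norm_add_mul_I, exp_half, exp_log (by positivity),
    show y ^ 2 + t ^ 2 = y ^ 2 * (1 + t ^ 2 / y ^ 2) by field_simp, sqrt_mul (sq_nonneg y),
    sqrt_sq hy.le]

lemma norm_GammaSeq_ofReal_add_mul_I {σ : ℝ} (hσ : 0 < σ) (t : ℝ) {n : ℕ} (hn : n ≠ 0) :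
    ‖Complex.GammaSeq (σ + t * Complex.I) n‖ =
      Real.GammaSeq σ n *
        exp (-(∑ j ∈ Finset.range (n + 1), log (1 + t ^ 2 / (σ + j) ^ 2)) / 2) := by
  have hfactor (j : ℕ) : ‖(σ + t * Complex.I) + j‖ =
      (σ + j) * exp (log (1 + t ^ 2 / (σ + j) ^ 2) / 2) := by
    rw [show (σ + t * Complex.I) + j = ((σ + j : ℝ) : ℂ) + t * Complex.I by push_cast; ring,
      norm_ofReal_add_mul_I_eq_mul_exp (by positivity)]
  have hn' : (0 : ℝ) < n := by positivity
  rw [Complex.GammaSeq, Real.GammaSeq, norm_div, norm_mul, norm_prod,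
    Finset.prod_congr rfl fun j _ => hfactor j, Finset.prod_mul_distrib, ← exp_sum,
    ← Finset.sum_div, neg_div, exp_neg, ← Complex.ofReal_natCast,
    Complex.norm_cpow_eq_rpow_re_of_pos hn', Complex.norm_natCast]
  simp only [Complex.add_re, Complex.ofReal_re, Complex.mul_re, Complex.I_re, Complex.I_im,
    Complex.ofReal_im, mul_zero, mul_one, sub_zero, add_zero]
  field_simp

lemma logOneAddSqDivPrimitive_sub_le_sum {τ σ : ℝ} (hτ : τ ≠ 0) (hσ : 0 < σ) (n : ℕ) :
    logOneAddSqDivPrimitive τ (σ + n) - logOneAddSqDivPrimitive τ σ ≤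
      ∑ j ∈ Finset.range n, log (1 + τ ^ 2 / (σ + j) ^ 2) := by
  have htelescope := Finset.sum_range_sub (fun k : ℕ => logOneAddSqDivPrimitive τ (σ + k)) n
  simp only [Nat.cast_add, Nat.cast_one, Nat.cast_zero, add_zero, ← add_assoc] at htelescope
  rw [← htelescope]
  exact Finset.sum_le_sum fun j _ => logOneAddSqDivPrimitive_add_one_sub_le hτ (by positivity)

lemma norm_Gamma_ofReal_add_mul_I_le {σ t : ℝ} (hσ : 0 < σ) (ht : t ≠ 0) :
    ‖Complex.Gamma (σ + t * Complex.I)‖ ≤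
      Real.Gamma σ * exp (-(π * |t| - logOneAddSqDivPrimitive |t| σ) / 2) := by
  have hτ : |t| ≠ 0 := abs_ne_zero.mpr ht
  have hseq : ∀ᶠ n : ℕ in atTop, ‖Complex.GammaSeq (σ + t * Complex.I) n‖ ≤
      Real.GammaSeq σ n * exp (-(logOneAddSqDivPrimitive |t| (σ + (n + 1 : ℕ)) -
        logOneAddSqDivPrimitive |t| σ) / 2) := by
    filter_upwards [eventually_ne_atTop 0] with n hn
    rw [norm_GammaSeq_ofReal_add_mul_I hσ t hn]
    have := logOneAddSqDivPrimitive_sub_le_sum hτ hσ (n + 1)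
    simp only [sq_abs] at this
    gcongr
    unfold Real.GammaSeq; positivity
  have hlim : Tendsto (fun n : ℕ => logOneAddSqDivPrimitive |t| (σ + (n + 1 : ℕ))) atTop
      (𝓝 (π * |t|)) :=
    (tendsto_logOneAddSqDivPrimitive_atTop (abs_pos.mpr ht)).comp
      (tendsto_atTop_add_const_left _ σ
        (tendsto_natCast_atTop_atTop.comp (tendsto_add_atTop_nat 1)))
  refine le_of_tendsto_of_tendsto ?_ ?_ hseq
  · exact (Complex.GammaSeq_tendsto_Gamma _).norm
  · exact (Real.GammaSeq_tendsto_Gamma σ).mul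
      (continuous_exp.continuousAt.tendsto.comp (((hlim.sub_const _).neg).div_const 2))

lemma exists_norm_Gamma_ofReal_add_mul_I_le {σ θ : ℝ} (hσ : 0 < σ) (hθ : θ < π / 2) :
    ∃ C, ∀ t : ℝ, ‖Complex.Gamma (σ + t * Complex.I)‖ ≤ C * exp (-θ * |t|) := by
  set ε := π / 2 - θ with hε_def
  have hε : 0 < ε := sub_pos.mpr hθ
  have hΓ := Real.Gamma_pos_of_pos hσ
  refine ⟨Real.Gamma σ * exp (σ * (ε - log ε)), fun t => ?_⟩
  rw [mul_assoc, ← exp_add]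
  rcases eq_or_ne t 0 with rfl | ht
  · have : 0 ≤ σ * (ε - log ε) := mul_nonneg hσ.le (by linarith [log_le_sub_one_of_pos hε])
    simp only [Complex.ofReal_zero, zero_mul, add_zero, Complex.Gamma_ofReal, Complex.norm_real,
      norm_of_nonneg hΓ.le, abs_zero, mul_zero]
    exact le_mul_of_one_le_right hΓ.le (one_le_exp (by linarith))
  · refine (norm_Gamma_ofReal_add_mul_I_le hσ ht).trans ?_
    have := logOneAddSqDivPrimitive_le (abs_pos.mpr ht) hσ hε
    have hεt : ε * |t| = π / 2 * |t| - θ * |t| := by rw [hε_def]; ring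
    gcongr
    linarith

lemma integrable_exp_neg_mul_abs {c : ℝ} (hc : 0 < c) :
    Integrable fun ν : ℝ => exp (-c * |ν|) := by
  refine (Continuous.locallyIntegrable (by fun_prop))
    |>.integrable_of_isBigO_atTop_of_norm_isNegInvariant
    (g := fun ν => exp (-c * ν)) (Eventually.of_forall fun ν => by simp) ?_
    ⟨Set.Ioi 0, Ioi_mem_atTop 0, exp_neg_integrableOn_Ioi 0 hc⟩
  refine (Asymptotics.isBigO_refl _ _).congr' ?_ EventuallyEq.rfl
  filter_upwards [eventually_ge_atTop 0] with ν hν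
  rw [abs_of_nonneg hν]

lemma integrable_add_abs_pow_mul_exp_neg_mul_abs {m R : ℝ} (hm : 0 < m) (hR : 0 ≤ R) (q : ℕ) :
    Integrable fun ν : ℝ => (R + |ν|) ^ q * exp (-m * |ν|) := by
  refine ((integrable_exp_neg_mul_abs (half_pos hm)).const_mul
    (q.factorial / (m / 2) ^ q * exp (m / 2 * R))).mono' (by fun_prop) ?_
  refine Eventually.of_forall fun ν => ?_
  have hpow : (R + |ν|) ^ q ≤ exp (m / 2 * (R + |ν|)) * (q.factorial / (m / 2) ^ q) :=
    calc (R + |ν|) ^ q = (m / 2 * (R + |ν|)) ^ q / q.factorial * (q.factorial / (m / 2) ^ q) := by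
          rw [mul_pow]; field_simp
      _ ≤ _ := by gcongr; exact pow_div_factorial_le_exp _ (by positivity) q
  rw [norm_of_nonneg (by positivity)]
  calc (R + |ν|) ^ q * exp (-m * |ν|)
      ≤ exp (m / 2 * (R + |ν|)) * (q.factorial / (m / 2) ^ q) * exp (-m * |ν|) := by gcongr
    _ = _ := by
      rw [show m / 2 * (R + |ν|) = m / 2 * R + m / 2 * |ν| by ring,
        show -(m / 2) * |ν| = m / 2 * |ν| + -m * |ν| by ring, exp_add, exp_add]
      ring

section Kernel

variable {a lam : ℝ}

noncomputable def kernelExponent (a lam x ν : ℝ) : ℝ :=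
  lam * ν / a * arctan (x / a) - lam / 2 * log (a ^ 2 + x ^ 2)

lemma κ_eq_mul_exp_kernelExponent (ha : 0 < a) (x ν : ℝ) :
    κ a lam x ν = 2 ^ (lam - 2) * lam * a ^ (lam - 1) / (π * Real.Gamma lam) *
      ‖Complex.Gamma ((lam / 2 : ℝ) + (lam * ν / (2 * a) : ℝ) * Complex.I)‖ ^ 2 *
      exp (kernelExponent a lam x ν) := by
  have harg : ((lam : ℂ) * a + Complex.I * (lam * ν)) / (2 * a) =
      (lam / 2 : ℝ) + (lam * ν / (2 * a) : ℝ) * Complex.I := by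
    have : (a : ℂ) ≠ 0 := by exact_mod_cast ha.ne'
    push_cast
    field_simp
  rw [κ, kernelExponent, harg, rpow_def_of_pos (by positivity : 0 < a ^ 2 + x ^ 2), exp_sub,
    show lam / 2 * log (a ^ 2 + x ^ 2) = log (a ^ 2 + x ^ 2) * (lam / 2) by ring]
  field_simp

lemma hasDerivAt_kernelExponent (ha : 0 < a) (x ν : ℝ) :
    HasDerivAt (fun y => kernelExponent a lam y ν) (lam * (ν - x) / (a ^ 2 + x ^ 2)) x := by
  have harctan : HasDerivAt (fun y => arctan (y / a)) (1 / (1 + (x / a) ^ 2) * (1 / a)) x :=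
    (hasDerivAt_arctan _).comp x ((hasDerivAt_id x).div_const a)
  have hlog : HasDerivAt (fun y => log (a ^ 2 + y ^ 2)) (2 * x ^ 1 / (a ^ 2 + x ^ 2)) x :=
    ((hasDerivAt_pow 2 x).const_add _).log (by positivity)
  refine ((harctan.const_mul (lam * ν / a)).sub (hlog.const_mul (lam / 2))).congr_deriv ?_
  field_simp

lemma kernelExponent_le (ha : 0 < a) (hlam : 0 < lam) {R x : ℝ} (hx : |x| ≤ R) (ν : ℝ) :
    kernelExponent a lam x ν ≤ lam / a * arctan (R / a) * |ν| - lam / 2 * log (a ^ 2) := by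
  have harctan : |arctan (x / a)| ≤ arctan (R / a) := by
    have hxa : |x / a| ≤ R / a := by
      rw [abs_div, abs_of_pos ha]; gcongr
    rw [abs_le] at hxa ⊢
    exact ⟨arctan_neg (R / a) ▸ arctan_mono hxa.1, arctan_mono hxa.2⟩
  have hlog : log (a ^ 2) ≤ log (a ^ 2 + x ^ 2) := log_le_log (by positivity) (by nlinarith)
  have h1 : lam * ν / a * arctan (x / a) ≤ lam / a * arctan (R / a) * |ν| :=
    calc lam * ν / a * arctan (x / a) ≤ |lam * ν / a * arctan (x / a)| := le_abs_self _
      _ = lam / a * |arctan (x / a)| * |ν| := by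
        rw [abs_mul, abs_div, abs_mul, abs_of_pos hlam, abs_of_pos ha]; ring
      _ ≤ lam / a * arctan (R / a) * |ν| := by gcongr
  unfold kernelExponent
  nlinarith

lemma κ_nonneg (ha : 0 < a) (hlam : 0 < lam) (x ν : ℝ) : 0 ≤ κ a lam x ν := by
  unfold κ
  positivity

lemma hasDerivAt_κ (ha : 0 < a) (x ν : ℝ) :
    HasDerivAt (fun y => κ a lam y ν) (κ a lam x ν * (lam * (ν - x) / (a ^ 2 + x ^ 2))) x := by
  simp only [κ_eq_mul_exp_kernelExponent ha]
  exact ((hasDerivAt_kernelExponent ha x ν).exp.const_mul _).congr_deriv (by ring)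

lemma continuous_κ (ha : 0 < a) (hlam : 0 < lam) (x : ℝ) : Continuous (κ a lam x) := by
  have hΓ : Continuous fun ν : ℝ =>
      Complex.Gamma ((lam / 2 : ℝ) + (lam * ν / (2 * a) : ℝ) * Complex.I) := by
    refine continuous_iff_continuousAt.mpr fun ν =>
      (Complex.differentiableAt_Gamma _ fun m hm => ?_).continuousAt.comp (by fun_prop)
    have := congrArg Complex.re hm
    simp only [Complex.add_re, Complex.ofReal_re, Complex.re_ofReal_mul, Complex.I_re, mul_zero,
      add_zero, Complex.neg_re, Complex.natCast_re] at this
    linarith [(m.cast_nonneg : (0 : ℝ) ≤ m)]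
  simp only [funext (κ_eq_mul_exp_kernelExponent ha x), kernelExponent]
  fun_prop

lemma exists_κ_le_exp_neg_mul_abs (ha : 0 < a) (hlam : 0 < lam) (R : ℝ) :
    ∃ K m : ℝ, 0 < m ∧ ∀ x ν, |x| ≤ R → κ a lam x ν ≤ K * exp (-m * |ν|) := by
  set θ' := arctan (R / a)
  set θ := (θ' + π / 2) / 2 with hθ
  have hθ'_lt : θ' < π / 2 := arctan_lt_pi_div_two (R / a)
  have hθ' : θ' < θ := by linarith
  obtain ⟨C, hC⟩ := exists_norm_Gamma_ofReal_add_mul_I_le (by positivity : 0 < lam / 2)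
    (by linarith : θ < π / 2)
  set A := 2 ^ (lam - 2) * lam * a ^ (lam - 1) / (π * Real.Gamma lam)
  refine ⟨A * C ^ 2 * exp (-(lam / 2) * log (a ^ 2)), lam / a * (θ - θ'), by
    have := sub_pos.mpr hθ'; positivity, fun x ν hx => ?_⟩
  have hΓ : ‖Complex.Gamma ((lam / 2 : ℝ) + (lam * ν / (2 * a) : ℝ) * Complex.I)‖ ^ 2 ≤
      C ^ 2 * exp (-(lam / a * θ) * |ν|) := by
    calc _ ≤ (C * exp (-θ * |lam * ν / (2 * a)|)) ^ 2 :=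
          pow_le_pow_left₀ (norm_nonneg _) (hC _) 2
      _ = C ^ 2 * exp (-(lam / a * θ) * |ν|) := by
        rw [mul_pow, ← exp_nat_mul, abs_div, abs_mul, abs_of_pos hlam,
          abs_of_pos (by positivity : 0 < 2 * a)]
        congr 2
        push_cast
        field_simp
  calc κ a lam x ν =
        A * ‖Complex.Gamma ((lam / 2 : ℝ) + (lam * ν / (2 * a) : ℝ) * Complex.I)‖ ^ 2 *
          exp (kernelExponent a lam x ν) := κ_eq_mul_exp_kernelExponent ha x ν
    _ ≤ A * (C ^ 2 * exp (-(lam / a * θ) * |ν|)) *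
        exp (lam / a * θ' * |ν| - lam / 2 * log (a ^ 2)) := by
      gcongr
      exact kernelExponent_le ha hlam hx ν
    _ = A * C ^ 2 * exp (-(lam / 2) * log (a ^ 2)) * exp (-(lam / a * (θ - θ')) * |ν|) := by
      simp only [mul_assoc, ← exp_add]
      ring_nf

lemma exists_integrable_abs_κ_mul_sub_pow_le (ha : 0 < a) (hlam : 0 < lam) {R : ℝ} (hR : 1 ≤ R)
    (n : ℕ) : ∃ g : ℝ → ℝ, Integrable g ∧
      ∀ x ν, |x| ≤ R → ∀ q ≤ n, |κ a lam x ν * (ν - x) ^ q| ≤ g ν := by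
  obtain ⟨K, m, hm, hκ⟩ := exists_κ_le_exp_neg_mul_abs ha hlam R
  refine ⟨fun ν => K * ((R + |ν|) ^ n * exp (-m * |ν|)),
    (integrable_add_abs_pow_mul_exp_neg_mul_abs hm (by linarith) n).const_mul K,
    fun x ν hx q hq => ?_⟩
  have hpow : |ν - x| ^ q ≤ (R + |ν|) ^ n :=
    calc |ν - x| ^ q ≤ (R + |ν|) ^ q := by gcongr; linarith [abs_sub ν x]
      _ ≤ (R + |ν|) ^ n := pow_le_pow_right₀ (by linarith [abs_nonneg ν]) hq
  rw [abs_mul, abs_pow, abs_of_nonneg (κ_nonneg ha hlam x ν)]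
  calc κ a lam x ν * |ν - x| ^ q ≤ K * exp (-m * |ν|) * (R + |ν|) ^ n :=
        mul_le_mul (hκ x ν hx) hpow (by positivity) ((κ_nonneg ha hlam x ν).trans (hκ x ν hx))
    _ = _ := by ring

lemma integrable_κ_mul_sub_pow (ha : 0 < a) (hlam : 0 < lam) (x : ℝ) (q : ℕ) :
    Integrable fun ν => κ a lam x ν * (ν - x) ^ q := by
  obtain ⟨g, hg, hbound⟩ :=
    exists_integrable_abs_κ_mul_sub_pow_le ha hlam (le_add_of_nonneg_left (abs_nonneg x)) q
  exact hg.mono' ((continuous_κ ha hlam x).mul (by fun_prop)).aestronglyMeasurable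
    (Eventually.of_forall fun ν => hbound x ν (by linarith) q le_rfl)

-- At `p = 0` the truncated exponent `p - 1 = 0` is harmless: its coefficient `p` vanishes.
lemma hasDerivAt_κ_mul_sub_pow (ha : 0 < a) (p : ℕ) (ν x : ℝ) :
    HasDerivAt (fun y => κ a lam y ν * (ν - y) ^ p)
      (lam / (a ^ 2 + x ^ 2) * (κ a lam x ν * (ν - x) ^ (p + 1)) -
        p * (κ a lam x ν * (ν - x) ^ (p - 1))) x := by
  have hpow : HasDerivAt (fun y => (ν - y) ^ p) (p * (ν - x) ^ (p - 1) * (0 - 1)) x :=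
    (hasDerivAt_pow p _).comp x ((hasDerivAt_const x ν).sub (hasDerivAt_id x))
  refine ((hasDerivAt_κ ha x ν).mul hpow).congr_deriv ?_
  rw [pow_succ]
  ring

lemma hasDerivAt_centralMoment (ha : 0 < a) (hlam : 0 < lam) (p : ℕ) (x₀ : ℝ) :
    HasDerivAt (centralMoment a lam p)
      (lam / (a ^ 2 + x₀ ^ 2) * centralMoment a lam (p + 1) x₀ -
        p * centralMoment a lam (p - 1) x₀) x₀ := by
  obtain ⟨g, hg, hbound⟩ := exists_integrable_abs_κ_mul_sub_pow_le ha hlam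
    (le_add_of_nonneg_left (abs_nonneg x₀)) (p + 1)
  have hint (q : ℕ) := integrable_κ_mul_sub_pow ha hlam x₀ q
  have hdom : ∀ᵐ ν, ∀ x ∈ Metric.ball x₀ 1,
      ‖lam / (a ^ 2 + x ^ 2) * (κ a lam x ν * (ν - x) ^ (p + 1)) -
        p * (κ a lam x ν * (ν - x) ^ (p - 1))‖ ≤ (lam / a ^ 2 + p) * g ν := by
    refine Eventually.of_forall fun ν x hx => ?_
    have hx : |x| ≤ |x₀| + 1 := by
      rw [Metric.mem_ball, dist_eq] at hx
      linarith [abs_sub_abs_le_abs_sub x x₀]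
    have hcoeff : lam / (a ^ 2 + x ^ 2) ≤ lam / a ^ 2 := by gcongr; nlinarith
    have h₁ := hbound x ν hx (p + 1) le_rfl
    have h₂ := hbound x ν hx (p - 1) (by omega)
    have hg0 : 0 ≤ g ν := (abs_nonneg _).trans h₁
    rw [norm_eq_abs]
    calc _ ≤ lam / (a ^ 2 + x ^ 2) * |κ a lam x ν * (ν - x) ^ (p + 1)| +
          p * |κ a lam x ν * (ν - x) ^ (p - 1)| := by
          refine (abs_sub _ _).trans_eq ?_
          rw [abs_mul (lam / _), abs_mul (p : ℝ), abs_of_pos (by positivity), Nat.abs_cast]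
      _ ≤ lam / a ^ 2 * g ν + p * g ν := by gcongr
      _ = _ := by ring
  have hderiv := hasDerivAt_integral_of_dominated_loc_of_deriv_le
    (Metric.ball_mem_nhds x₀ one_pos)
    (Eventually.of_forall fun x =>
      ((continuous_κ ha hlam x).mul (by fun_prop)).aestronglyMeasurable)
    (hint p) (((hint (p + 1)).const_mul _).sub ((hint (p - 1)).const_mul _)).aestronglyMeasurable
    hdom (hg.const_mul _) (Eventually.of_forall fun ν x _ => hasDerivAt_κ_mul_sub_pow ha p ν x)
  rw [integral_sub ((hint (p + 1)).const_mul _) ((hint (p - 1)).const_mul _), integral_const_mul,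
    integral_const_mul] at hderiv
  exact hderiv.2

end Kernel

theorem centralMoment_recurrence_general (lam a : ℝ) (hlam : 0 < lam) (ha : 0 < a)
    (p : ℕ) :
    Differentiable ℝ (fun y => centralMoment a lam p y) ∧
    ∀ x : ℝ, lam * centralMoment a lam (p + 1) x / (a ^ 2 + x ^ 2) =
      p * centralMoment a lam (p - 1) x +
        deriv (fun y => centralMoment a lam p y) x := by
  refine ⟨fun x => (hasDerivAt_centralMoment ha hlam p x).differentiableAt, fun x => ?_⟩
  rw [(hasDerivAt_centralMoment ha hlam p x).deriv]
  ring

/-- Recurrence relation for the central moments: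
`λ μ_{p+1}(x)/(a²+x²) = p μ_{p−1}(x) + (μ_p)'(x)`. -/
theorem centralMoment_recurrence (lam a : ℝ) (hlam : 0 < lam) (ha : 0 < a)
    (p : ℕ) (hp : 1 ≤ p) :
    Differentiable ℝ (fun y => centralMoment a lam p y) ∧
    ∀ x : ℝ, lam * centralMoment a lam (p + 1) x / (a ^ 2 + x ^ 2) =
      p * centralMoment a lam (p - 1) x +
        deriv (fun y => centralMoment a lam p y) x :=
  centralMoment_recurrence_general lam a hlam ha p
end

section
/- Let a > 0 and let p be a nonnegative integer. There exists a family of polynomial functions Ӷ^a_{i,j,p} : ℝ → ℝ, indexed by integers i, j ≥ 0 with 2i + j ≤ p and independent of λ and ν, such that for all λ > 0, x ∈ ℝ and ν ∈ ℝ: (a² + x²)^p · (∂^p/∂x^p) κ^a_λ(x,ν) = Σ_{2i+j ≤ p, i,j ≥ 0} λ^{i+j} (ν − x)^j Ӷ^a_{i,j,p}(x) κ^a_λ(x,ν). -/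
open MeasureTheory Real Filter Topology

/-! Writing `κ = c · exp(λν/a · arctan(x/a) - λ/2 · log(a² + x²))` shows that
`∂ₓ κ = κ · λ(ν - x)/(a² + x²)`. Hence if `(a² + x²)^p ∂ₓ^p κ = Φ κ`, then
`(a² + x²)^(p+1) ∂ₓ^(p+1) κ = ((a² + x²) ∂ₓΦ + (λ(ν - x) - 2px) Φ) κ`, and this operation sends a
term `λ^(i+j) (ν - x)^j G(x)` with `2i + j ≤ p` to terms of indices `(i, j)`, `(i + 1, j - 1)` and
`(i, j + 1)`, all with `2i + j ≤ p + 1`. Induction on `p` concludes. -/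

open Polynomial Finset

lemma kernel_eq_mul_exp {a : ℝ} (ha : 0 < a) (lam x ν : ℝ) :
    κ a lam x ν = (2 ^ (lam - 2) * lam * a ^ (lam - 1)) / (Real.pi * Real.Gamma lam) *
      ‖Complex.Gamma ((lam * a + Complex.I * (lam * ν)) / (2 * a))‖ ^ 2 *
      Real.exp (lam * ν / a * Real.arctan (x / a) - lam / 2 * Real.log (a ^ 2 + x ^ 2)) := by
  rw [κ, Real.exp_sub, Real.rpow_def_of_pos (x := a ^ 2 + x ^ 2) (by positivity),
    mul_comm (Real.log _)]
  ring

lemma hasDerivAt_kernel {a : ℝ} (ha : 0 < a) (lam x ν : ℝ) :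
    HasDerivAt (fun y => κ a lam y ν) (κ a lam x ν * (lam * (ν - x) / (a ^ 2 + x ^ 2))) x := by
  have hpos : 0 < a ^ 2 + x ^ 2 := by positivity
  have harctan : HasDerivAt (fun y => lam * ν / a * Real.arctan (y / a))
      (lam * ν / a * (1 / (1 + (x / a) ^ 2) * (1 / a))) x :=
    ((hasDerivAt_id' x).div_const a).arctan.const_mul _
  have hlog : HasDerivAt (fun y => lam / 2 * Real.log (a ^ 2 + y ^ 2))
      (lam / 2 * (2 * x / (a ^ 2 + x ^ 2))) x := by
    simpa using (((hasDerivAt_pow 2 x).const_add (a ^ 2)).log hpos.ne').const_mul (lam / 2)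
  simp only [funext (kernel_eq_mul_exp ha lam · ν), kernel_eq_mul_exp ha lam x ν]
  refine ((harctan.sub hlog).exp.const_mul _).congr_deriv ?_
  simp only [Pi.sub_apply]
  field_simp

def kernelIndex (p : ℕ) : Finset (ℕ × ℕ) :=
  (range (p + 1) ×ˢ range (p + 1)).filter fun ij => 2 * ij.1 + ij.2 ≤ p

lemma mem_kernelIndex {p : ℕ} {ij : ℕ × ℕ} : ij ∈ kernelIndex p ↔ 2 * ij.1 + ij.2 ≤ p := by
  simp only [kernelIndex, mem_filter, mem_product, mem_range]
  omega

def kernelMonomial (i j : ℕ) (q : ℝ[X]) (lam x ν : ℝ) : ℝ :=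
  lam ^ (i + j) * (ν - x) ^ j * q.eval x

@[simp]
lemma kernelMonomial_zero (i j : ℕ) : kernelMonomial i j 0 = 0 := by
  ext
  simp [kernelMonomial]

lemma kernelMonomial_add (i j : ℕ) (q r : ℝ[X]) :
    kernelMonomial i j (q + r) = kernelMonomial i j q + kernelMonomial i j r := by
  ext lam x ν
  simp only [kernelMonomial, eval_add, Pi.add_apply]
  ring

lemma kernelMonomial_smul (i j : ℕ) (c : ℝ) (q : ℝ[X]) :
    kernelMonomial i j (c • q) = c • kernelMonomial i j q := by
  ext lam x ν
  simp only [kernelMonomial, eval_smul, Pi.smul_apply, smul_eq_mul]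
  ring

def kernelCoeffs (p : ℕ) : Submodule ℝ (ℝ → ℝ → ℝ → ℝ) where
  carrier := {Φ | ∃ G : ℕ → ℕ → ℝ[X],
    Φ = ∑ ij ∈ kernelIndex p, kernelMonomial ij.1 ij.2 (G ij.1 ij.2)}
  add_mem' := by
    rintro _ _ ⟨G, rfl⟩ ⟨H, rfl⟩
    exact ⟨G + H, by simp only [Pi.add_apply, kernelMonomial_add, sum_add_distrib]⟩
  zero_mem' := ⟨0, by simp⟩
  smul_mem' := by
    rintro c _ ⟨G, rfl⟩
    exact ⟨c • G, by simp only [Pi.smul_apply, kernelMonomial_smul, smul_sum]⟩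

lemma kernelMonomial_mem {p i j : ℕ} (h : 2 * i + j ≤ p) (q : ℝ[X]) :
    kernelMonomial i j q ∈ kernelCoeffs p := by
  refine ⟨fun i' j' => if (i', j') = (i, j) then q else 0, ?_⟩
  rw [sum_eq_single_of_mem (i, j) (mem_kernelIndex.2 h) fun ij _ hij => ?_]
  · simp
  · simp [hij]

-- At `j = 0` the truncated `j - 1` is harmless: its term carries the factor `j`.
noncomputable def kernelMonomialDeriv (i j : ℕ) (q : ℝ[X]) (lam x ν : ℝ) : ℝ :=
  lam ^ (i + j) * ((ν - x) ^ j * q.derivative.eval x - j * (ν - x) ^ (j - 1) * q.eval x)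

lemma hasDerivAt_kernelMonomial (i j : ℕ) (q : ℝ[X]) (lam x ν : ℝ) :
    HasDerivAt (fun y => kernelMonomial i j q lam y ν) (kernelMonomialDeriv i j q lam x ν) x := by
  refine ((((hasDerivAt_id' x).const_sub ν).pow j).mul (q.hasDerivAt x)).const_mul (lam ^ (i + j))
    |>.congr_deriv ?_ |>.congr_of_eventuallyEq (.of_forall fun y => ?_)
  · simp only [kernelMonomialDeriv, Pi.pow_apply]
    ring
  · simp only [kernelMonomial, Pi.mul_apply, Pi.pow_apply]
    ring

def kernelRaise (a : ℝ) (p : ℕ) (Φ Φ' : ℝ → ℝ → ℝ → ℝ) (lam x ν : ℝ) : ℝ :=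
  (a ^ 2 + x ^ 2) * Φ' lam x ν + (lam * (ν - x) - 2 * p * x) * Φ lam x ν

lemma kernelRaise_sum {ι : Type*} (s : Finset ι) (a : ℝ) (p : ℕ) (Φ Φ' : ι → ℝ → ℝ → ℝ → ℝ) :
    kernelRaise a p (∑ i ∈ s, Φ i) (∑ i ∈ s, Φ' i) = ∑ i ∈ s, kernelRaise a p (Φ i) (Φ' i) := by
  ext lam x ν
  simp only [kernelRaise, Finset.sum_apply, mul_sum, sum_add_distrib]

lemma kernelRaise_kernelMonomial_mem {p i j : ℕ} (h : 2 * i + j ≤ p) (a : ℝ) (q : ℝ[X]) :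
    kernelRaise a p (kernelMonomial i j q) (kernelMonomialDeriv i j q) ∈ kernelCoeffs (p + 1) := by
  set r := (X ^ 2 + C (a ^ 2)) * q.derivative - (2 * p : ℝ) • (X * q)
  rcases j with _ | k <;> [
    convert add_mem (kernelMonomial_mem (show 2 * i + 0 ≤ p + 1 by omega) r)
      (kernelMonomial_mem (show 2 * i + 1 ≤ p + 1 by omega) q) using 1;
    convert add_mem (add_mem (kernelMonomial_mem (show 2 * i + (k + 1) ≤ p + 1 by omega) r)
      (kernelMonomial_mem (show 2 * (i + 1) + k ≤ p + 1 by omega)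
        (-(k + 1 : ℝ) • ((X ^ 2 + C (a ^ 2)) * q))))
      (kernelMonomial_mem (show 2 * i + (k + 2) ≤ p + 1 by omega) q) using 1]
  all_goals
    ext lam x ν
    simp only [r, kernelRaise, kernelMonomial, kernelMonomialDeriv, Pi.add_apply, eval_add,
      eval_sub, eval_mul, eval_smul, eval_pow, eval_X, eval_C, smul_eq_mul, Nat.cast_add,
      Nat.cast_one, Nat.add_sub_cancel]
    ring

lemma exists_hasDerivAt_kernelRaise_mem {p : ℕ} {Φ : ℝ → ℝ → ℝ → ℝ} (hΦ : Φ ∈ kernelCoeffs p)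
    (a : ℝ) : ∃ Φ' : ℝ → ℝ → ℝ → ℝ, (∀ lam x ν, HasDerivAt (fun y => Φ lam y ν) (Φ' lam x ν) x) ∧
      kernelRaise a p Φ Φ' ∈ kernelCoeffs (p + 1) := by
  obtain ⟨G, rfl⟩ := hΦ
  refine ⟨∑ ij ∈ kernelIndex p, kernelMonomialDeriv ij.1 ij.2 (G ij.1 ij.2), fun lam x ν => ?_, ?_⟩
  · simp only [Finset.sum_apply]
    exact HasDerivAt.fun_sum fun ij _ => hasDerivAt_kernelMonomial _ _ _ _ _ _
  · rw [kernelRaise_sum]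
    exact sum_mem fun ij hij => kernelRaise_kernelMonomial_mem (mem_kernelIndex.1 hij) a _

-- Written without `p - 1`, so that `field_simp` can treat `(a² + x²) ^ p` as an atom.
lemma hasDerivAt_sq_add_sq_pow {a x : ℝ} (hx : a ^ 2 + x ^ 2 ≠ 0) (p : ℕ) :
    HasDerivAt (fun y => (a ^ 2 + y ^ 2) ^ p)
      (2 * p * x * (a ^ 2 + x ^ 2) ^ p / (a ^ 2 + x ^ 2)) x := by
  refine (((hasDerivAt_pow 2 x).const_add (a ^ 2)).pow p).congr_deriv ?_
  rcases p with _ | p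
  · simp
  · rw [Nat.add_sub_cancel]
    field_simp
    ring

theorem exists_mem_kernelCoeffs_iteratedDeriv_kernel {a : ℝ} (ha : 0 < a) (p : ℕ) :
    ∃ Φ ∈ kernelCoeffs p, ∀ lam x ν,
      (a ^ 2 + x ^ 2) ^ p * iteratedDeriv p (fun y => κ a lam y ν) x = Φ lam x ν * κ a lam x ν := by
  induction p with
  | zero => exact ⟨kernelMonomial 0 0 1, kernelMonomial_mem (by norm_num) 1, fun lam x ν => by
      simp [kernelMonomial]⟩
  | succ p ih =>
    obtain ⟨Φ, hΦ, hp⟩ := ih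
    obtain ⟨Φ', hΦ', hraise⟩ := exists_hasDerivAt_kernelRaise_mem hΦ a
    refine ⟨kernelRaise a p Φ Φ', hraise, fun lam x ν => ?_⟩
    have hpos (y : ℝ) : 0 < a ^ 2 + y ^ 2 := by positivity
    have hquot : iteratedDeriv p (fun y => κ a lam y ν)
        = fun y => Φ lam y ν * κ a lam y ν / (a ^ 2 + y ^ 2) ^ p := by
      ext y
      rw [← hp, mul_div_cancel_left₀ _ (pow_pos (hpos y) p).ne']
    have hderiv := ((hΦ' lam x ν).fun_mul (hasDerivAt_kernel ha lam x ν)).fun_div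
      (hasDerivAt_sq_add_sq_pow (hpos x).ne' p) (pow_pos (hpos x) p).ne'
    rw [iteratedDeriv_succ, hquot, hderiv.deriv, kernelRaise]
    field_simp
    ring

/-- There exist polynomials `Ӷ^a_{i,j,p}`, independent of `λ` and `ν`, such that
`(a²+x²)^p ∂^p/∂x^p κ^a_λ(x,ν) = Σ_{2i+j≤p} λ^{i+j} (ν−x)^j Ӷ^a_{i,j,p}(x) κ^a_λ(x,ν)`. -/
theorem iteratedDeriv_kernel (a : ℝ) (ha : 0 < a) (p : ℕ) :
    ∃ G : ℕ → ℕ → Polynomial ℝ, ∀ lam > (0 : ℝ), ∀ x ν : ℝ,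
      (a ^ 2 + x ^ 2) ^ p * iteratedDeriv p (fun y => κ a lam y ν) x =
        ∑ ij ∈ (Finset.range (p + 1) ×ˢ Finset.range (p + 1)).filter
            (fun ij => 2 * ij.1 + ij.2 ≤ p),
          lam ^ (ij.1 + ij.2) * (ν - x) ^ ij.2 * (G ij.1 ij.2).eval x *
            κ a lam x ν := by
  obtain ⟨Φ, ⟨G, rfl⟩, hΦ⟩ := exists_mem_kernelCoeffs_iteratedDeriv_kernel ha p
  refine ⟨G, fun lam _ x ν => ?_⟩
  simp only [hΦ, Finset.sum_apply, sum_mul]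
  rfl
end
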